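/- With the notation and hypotheses of the previous statement but with L_S = +∞ (i.e., (1/d)trace(S_d) → ∞) and (max_i α_i^d)/(Σ_i α_i^d) → 0, the ratio ‖u_d‖² / trace(S_d) → 1 in probability as d → ∞, where u_d ~ N(0, S_d). -/

import Mathlib

open Filter MeasureTheory ProbabilityTheory
open scoped NNReal

/-!
By Chebyshev's inequality it suffices that `Var[‖u‖² / T] → 0`, where `T = ∑ α_i = E‖u‖²`.
The `u_i²` are independent with variances `c α_i²`, where `c = Var[Z²]` for a standard Gaussian
`Z`, so `Var[‖u‖² / T] = c ∑ α_i² / T² ≤ c (max_i α_i) / T → 0`.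
-/

section Gaussian

variable {v : ℝ≥0}

lemma memLp_sq_gaussianReal : MemLp (fun x : ℝ => x ^ 2) 2 (gaussianReal 0 v) := by
  rw [memLp_two_iff_integrable_sq (by fun_prop)]
  simpa [← pow_mul, Even.pow_abs (by decide : Even 4)] using
    (memLp_id_gaussianReal (μ := 0) (v := v) 4).integrable_norm_pow'

lemma integral_sq_gaussianReal : ∫ x, x ^ 2 ∂gaussianReal 0 v = v := by
  simpa [variance_eq_integral measurable_id'.aemeasurable] using
    (variance_fun_id_gaussianReal (μ := 0) (v := v))

-- Scaling a standard Gaussian by `√v` avoids computing the fourth moment.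
lemma variance_sq_gaussianReal :
    Var[fun x => x ^ 2; gaussianReal 0 v] = v ^ 2 * Var[fun x => x ^ 2; gaussianReal 0 1] := by
  have hmap : (gaussianReal 0 1).map (Real.sqrt v * ·) = gaussianReal 0 v := by
    rw [gaussianReal_map_const_mul]
    congr 1
    · simp
    · ext; simp
  rw [← hmap, variance_map (by fun_prop) (by fun_prop)]
  have hsq : (fun x : ℝ => x ^ 2) ∘ (Real.sqrt v * ·) = fun x => (v : ℝ) * x ^ 2 := by
    ext x; simp [mul_pow]
  rw [hsq, variance_const_mul]

end Gaussian

namespace ProbabilityTheory.HasLaw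

variable {Ω : Type*} {mΩ : MeasurableSpace Ω} {P : Measure Ω}

lemma of_map_eq {𝓧 : Type*} {m𝓧 : MeasurableSpace 𝓧} {X : Ω → 𝓧} {μ : Measure 𝓧} [NeZero μ]
    (h : P.map X = μ) : HasLaw X μ P where
  aemeasurable := aemeasurable_of_map_neZero (h ▸ inferInstance)
  map_eq := h

variable {X : Ω → ℝ} {v : ℝ≥0}

lemma memLp_sq_of_gaussianReal (hX : HasLaw X (gaussianReal 0 v) P) :
    MemLp (fun ω => X ω ^ 2) 2 P :=
  (hX.map_eq ▸ memLp_sq_gaussianReal).comp_of_map hX.aemeasurable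

lemma integral_sq_of_gaussianReal (hX : HasLaw X (gaussianReal 0 v) P) :
    P[fun ω => X ω ^ 2] = (v : ℝ) := by
  rw [← integral_sq_gaussianReal (v := v), ← hX.integral_comp (by fun_prop)]
  rfl

lemma variance_sq_of_gaussianReal (hX : HasLaw X (gaussianReal 0 v) P) :
    Var[fun ω => X ω ^ 2; P] = v ^ 2 * Var[fun x => x ^ 2; gaussianReal 0 1] := by
  rw [← variance_sq_gaussianReal, ← hX.map_eq, variance_map (by fun_prop) hX.aemeasurable]
  rfl

end ProbabilityTheory.HasLaw

section GaussianSquares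

variable {Ω : Type*} {mΩ : MeasurableSpace Ω} {P : Measure Ω}
variable {ι : Type*} [Fintype ι] {u : ι → Ω → ℝ} {α : ι → ℝ≥0}

lemma memLp_sum_sq_of_hasLaw_gaussianReal (hu : ∀ i, HasLaw (u i) (gaussianReal 0 (α i)) P) :
    MemLp (fun ω => ∑ i, u i ω ^ 2) 2 P :=
  memLp_finsetSum _ fun i _ => (hu i).memLp_sq_of_gaussianReal

lemma integral_sum_sq_of_hasLaw_gaussianReal [IsFiniteMeasure P]
    (hu : ∀ i, HasLaw (u i) (gaussianReal 0 (α i)) P) :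
    P[fun ω => ∑ i, u i ω ^ 2] = ∑ i, (α i : ℝ) := by
  rw [integral_finsetSum _ fun i _ => ((hu i).memLp_sq_of_gaussianReal).integrable one_le_two]
  exact Finset.sum_congr rfl fun i _ => (hu i).integral_sq_of_gaussianReal

lemma variance_sum_sq_of_iIndepFun_gaussianReal (hind : iIndepFun u P)
    (hu : ∀ i, HasLaw (u i) (gaussianReal 0 (α i)) P) :
    Var[fun ω => ∑ i, u i ω ^ 2; P] =
      Var[fun x => x ^ 2; gaussianReal 0 1] * ∑ i, (α i : ℝ) ^ 2 := by
  have hpair : Set.Pairwise ↑(Finset.univ : Finset ι)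
      fun i j => (fun ω => u i ω ^ 2) ⟂ᵢ[P] (fun ω => u j ω ^ 2) := fun i _ j _ hij =>
    (hind.indepFun hij).comp (measurable_id.pow_const 2) (measurable_id.pow_const 2)
  have hsum : (fun ω => ∑ i, u i ω ^ 2) = ∑ i, fun ω => u i ω ^ 2 := by
    ext; simp
  rw [hsum, IndepFun.variance_sum (fun i _ => (hu i).memLp_sq_of_gaussianReal) hpair,
    Finset.mul_sum]
  exact Finset.sum_congr rfl fun i _ => by rw [(hu i).variance_sq_of_gaussianReal, mul_comm]

end GaussianSquares

section SecondMomentMethod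

variable {Ω ι : Type*} {mΩ : MeasurableSpace Ω} {P : Measure Ω} [IsFiniteMeasure P]

lemma meas_dist_div_ge_le_variance_div_sq {S : Ω → ℝ} (hS : MemLp S 2 P) {T ε : ℝ}
    (hmean : P[S] = T) (hT : T ≠ 0) (hε : 0 < ε) :
    P {ω | ε ≤ dist (S ω / T) 1} ≤ ENNReal.ofReal (Var[S; P] / T ^ 2 / ε ^ 2) := by
  have hset : {ω | ε ≤ dist (S ω / T) 1} = {ω | ε * |T| ≤ |S ω - P[S]|} := by
    ext ω
    rw [Set.mem_ofPred_eq, Set.mem_ofPred_eq, Real.dist_eq, hmean, ← le_div_iff₀ (abs_pos.2 hT),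
      ← abs_div, sub_div, div_self hT]
  rw [hset]
  refine (meas_ge_le_variance_div_sq hS (by positivity)).trans_eq ?_
  rw [mul_pow, sq_abs, div_div, mul_comm]

lemma tendstoInMeasure_div_one_of_variance_div_sq_tendsto_zero {l : Filter ι}
    {S : ι → Ω → ℝ} {T : ι → ℝ} (hS : ∀ n, MemLp (S n) 2 P) (hmean : ∀ n, P[S n] = T n)
    (hT : ∀ᶠ n in l, T n ≠ 0) (hvar : Tendsto (fun n => Var[S n; P] / T n ^ 2) l (nhds 0)) :
    TendstoInMeasure P (fun n ω => S n ω / T n) l fun _ => 1 := by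
  rw [tendstoInMeasure_iff_dist]
  intro ε hε
  have hbound : Tendsto (fun n => ENNReal.ofReal (Var[S n; P] / T n ^ 2 / ε ^ 2)) l (nhds 0) := by
    simpa using ENNReal.tendsto_ofReal (hvar.div_const (ε ^ 2))
  exact tendsto_of_tendsto_of_tendsto_of_le_of_le' tendsto_const_nhds hbound
    (Eventually.of_forall fun _ => zero_le)
    (hT.mono fun n hn => meas_dist_div_ge_le_variance_div_sq (hS n) (hmean n) hn hε)

end SecondMomentMethod

lemma Finset.sum_sq_div_sq_sum_le_sup_div_sum {ι : Type*} (s : Finset ι) (α : ι → ℝ≥0) :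
    (∑ i ∈ s, (α i : ℝ) ^ 2) / (∑ i ∈ s, (α i : ℝ)) ^ 2 ≤
      ((s.sup α : ℝ≥0) : ℝ) / ∑ i ∈ s, (α i : ℝ) := by
  set T := ∑ i ∈ s, (α i : ℝ)
  rcases (Finset.sum_nonneg fun i _ => (α i).coe_nonneg : 0 ≤ T).eq_or_lt with hT | hT
  · simp [T, ← hT]
  have hsq : ∑ i ∈ s, (α i : ℝ) ^ 2 ≤ ((s.sup α : ℝ≥0) : ℝ) * T := by
    rw [Finset.mul_sum]
    refine Finset.sum_le_sum fun i hi => ?_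
    rw [sq]
    exact mul_le_mul_of_nonneg_right (by exact_mod_cast Finset.le_sup hi) (α i).coe_nonneg
  calc (∑ i ∈ s, (α i : ℝ) ^ 2) / T ^ 2 ≤ ((s.sup α : ℝ≥0) : ℝ) * T / T ^ 2 := by gcongr
    _ = ((s.sup α : ℝ≥0) : ℝ) / T := by field_simp

theorem norm_sq_div_trace_tendsto_one_general {Ω : Type*} [MeasurableSpace Ω]
    (P : Measure Ω) [IsProbabilityMeasure P]
    (u : (d : ℕ) → Fin d → Ω → ℝ) (α : (d : ℕ) → Fin d → ℝ≥0)
    (hindep : ∀ d, iIndepFun (u d) P)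
    (hgauss : ∀ d i, Measure.map (u d i) P = gaussianReal 0 (α d i))
    (htrace : Tendsto (fun d : ℕ => ∑ i, (α d i : ℝ)) atTop atTop)
    (hmax : Tendsto (fun d : ℕ =>
        ((Finset.univ.sup (α d) : ℝ≥0) : ℝ) / ∑ i, (α d i : ℝ)) atTop (nhds 0)) :
    TendstoInMeasure P
      (fun d ω => (∑ i, (u d i ω) ^ 2) / ∑ i, (α d i : ℝ)) atTop (fun _ => (1 : ℝ)) := by
  have hu d i : HasLaw (u d i) (gaussianReal 0 (α d i)) P :=
    HasLaw.of_map_eq (hgauss d i)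
  refine tendstoInMeasure_div_one_of_variance_div_sq_tendsto_zero
    (fun d => memLp_sum_sq_of_hasLaw_gaussianReal (hu d))
    (fun d => integral_sum_sq_of_hasLaw_gaussianReal (hu d))
    ((htrace.eventually_gt_atTop 0).mono fun _ h => h.ne') ?_
  refine squeeze_zero (fun d => div_nonneg (variance_nonneg _ _) (sq_nonneg _)) (fun d => ?_)
    (by simpa using hmax.const_mul Var[fun x => x ^ 2; gaussianReal 0 1])
  rw [variance_sum_sq_of_iIndepFun_gaussianReal (hindep d) (hu d), mul_div_assoc]
  exact mul_le_mul_of_nonneg_left (Finset.univ.sum_sq_div_sq_sum_le_sup_div_sum _)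
    (variance_nonneg _ _)

/-- Infinite-trace case: if `u d ~ N(0, S_d)` (independent coordinates with variances
`α d i` in the eigenbasis), `trace(S_d) = Σ_i α_i^d → ∞` and
`(max_i α_i^d)/(Σ_i α_i^d) → 0`, then `‖u_d‖² / trace(S_d) → 1` in probability. -/
theorem norm_sq_div_trace_tendsto_one {Ω : Type*} [MeasurableSpace Ω]
    (P : Measure Ω) [IsProbabilityMeasure P]
    (u : (d : ℕ) → Fin d → Ω → ℝ) (α : (d : ℕ) → Fin d → ℝ≥0)
    (hαpos : ∀ d i, 0 < α d i)
    (hindep : ∀ d, iIndepFun (u d) P)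
    (hgauss : ∀ d i, Measure.map (u d i) P = gaussianReal 0 (α d i))
    (htrace : Tendsto (fun d : ℕ => ∑ i, (α d i : ℝ)) atTop atTop)
    (hmax : Tendsto (fun d : ℕ =>
        ((Finset.univ.sup (α d) : ℝ≥0) : ℝ) / ∑ i, (α d i : ℝ)) atTop (nhds 0)) :
    TendstoInMeasure P
      (fun d ω => (∑ i, (u d i ω) ^ 2) / ∑ i, (α d i : ℝ)) atTop (fun _ => (1 : ℝ)) :=
  norm_sq_div_trace_tendsto_one_general P u α hindep hgauss htrace hmax
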